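/- If T is a bounded linear operator on a complex Hilbert space with Cartesian decomposition T = A + iB, then (1/4)‖ |T|² + |T*|² ‖ ≤ (√2/2) ω(A² + iB²) ≤ ω(T)². -/

import Mathlib

open scoped InnerProductSpace
open ContinuousLinearMap

variable {H : Type*} [NormedAddCommGroup H] [InnerProductSpace ℂ H] [CompleteSpace H]

/-- The numerical radius of a bounded operator. -/
noncomputable def numRadius (T : H →L[ℂ] H) : ℝ :=
  ⨆ x : {x : H // ‖x‖ = 1}, ‖⟪T x.1, x.1⟫_ℂ‖

/-- The absolute value |A| = (A*A)^(1/2). -/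
noncomputable def opAbs (A : H →L[ℂ] H) : H →L[ℂ] H := CFC.sqrt (adjoint A * A)

/-- Real part of the Cartesian decomposition. -/
noncomputable def reP (T : H →L[ℂ] H) : H →L[ℂ] H := (2:ℂ)⁻¹ • (T + adjoint T)

/-- Imaginary part of the Cartesian decomposition. -/
noncomputable def imP (T : H →L[ℂ] H) : H →L[ℂ] H := (2*Complex.I:ℂ)⁻¹ • (T - adjoint T)

/-!
Write `A = reP T`, `B = imP T`. Then `T†T + TT† = 2 (A² + B²)`, and
`⟪(A² + i B²) x, x⟫ = ‖A x‖² - i ‖B x‖²` has modulus `√(‖A x‖⁴ + ‖B x‖⁴)`.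
Since the norm of a self-adjoint operator is bounded by its numerical radius and
`a + b ≤ √2 √(a² + b²)`, this gives `‖A² + B²‖ ≤ √2 ω(A² + i B²)`. Conversely
`√(a² + b²) ≤ √2 c²` when `a, b ≤ c²`, and `‖A‖, ‖B‖ ≤ ω(T)` because `⟪A x, x⟫` and `⟪B x, x⟫`
are, up to sign, the real and imaginary parts of `⟪T x, x⟫`.
-/

section NumericalRadius

variable {E : Type*} [NormedAddCommGroup E] [InnerProductSpace ℂ E]

theorem numRadius_bddAbove (T : E →L[ℂ] E) :
    BddAbove (Set.range fun x : {x : E // ‖x‖ = 1} => ‖⟪T x.1, x.1⟫_ℂ‖) := by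
  refine ⟨‖T‖, ?_⟩
  rintro _ ⟨⟨x, hx⟩, rfl⟩
  calc ‖⟪T x, x⟫_ℂ‖ ≤ ‖T x‖ * ‖x‖ := norm_inner_le_norm _ _
    _ ≤ ‖T‖ * ‖x‖ * ‖x‖ := by gcongr; exact T.le_opNorm x
    _ = ‖T‖ := by rw [hx, mul_one, mul_one]

theorem numRadius_nonneg (T : E →L[ℂ] E) : 0 ≤ numRadius T :=
  Real.iSup_nonneg fun _ => norm_nonneg _

theorem norm_inner_le_numRadius (T : E →L[ℂ] E) {x : E} (hx : ‖x‖ = 1) :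
    ‖⟪T x, x⟫_ℂ‖ ≤ numRadius T :=
  le_ciSup (numRadius_bddAbove T) ⟨x, hx⟩

theorem numRadius_le_of_forall (T : E →L[ℂ] E) {c : ℝ} (hc : 0 ≤ c)
    (h : ∀ x : E, ‖x‖ = 1 → ‖⟪T x, x⟫_ℂ‖ ≤ c) : numRadius T ≤ c :=
  Real.iSup_le (fun x => h x.1 x.2) hc

theorem numRadius_le_mul_numRadius {S T : E →L[ℂ] E} {c : ℝ} (hc : 0 ≤ c)
    (h : ∀ x : E, ‖⟪S x, x⟫_ℂ‖ ≤ c * ‖⟪T x, x⟫_ℂ‖) : numRadius S ≤ c * numRadius T :=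
  numRadius_le_of_forall S (mul_nonneg hc (numRadius_nonneg T)) fun x hx =>
    (h x).trans (mul_le_mul_of_nonneg_left (norm_inner_le_numRadius T hx) hc)

theorem LinearMap.IsSymmetric.norm_le_numRadius {A : E →L[ℂ] E}
    (hA : (A : E →ₗ[ℂ] E).IsSymmetric) : ‖A‖ ≤ numRadius A := by
  rw [A.norm_eq_iSup_rayleighQuotient hA]
  refine ciSup_le fun x => ?_
  rcases eq_or_ne x 0 with rfl | hx
  · simpa using numRadius_nonneg A
  have hu : ‖(‖x‖⁻¹ : ℂ) • x‖ = 1 := by simp [norm_smul, hx]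
  rw [← A.rayleigh_smul x (c := (‖x‖⁻¹ : ℂ)) (by simpa using hx), rayleighQuotient,
    reApplyInnerSelf_apply, hu, one_pow, div_one]
  exact (Complex.abs_re_le_norm _).trans (norm_inner_le_numRadius A hu)

variable {A B : E →L[ℂ] E}

theorem LinearMap.IsSymmetric.inner_sq_apply_self (hA : (A : E →ₗ[ℂ] E).IsSymmetric) (x : E) :
    ⟪(A ^ 2) x, x⟫_ℂ = ((‖A x‖ ^ 2 : ℝ) : ℂ) := by
  rw [sq, mul_apply_eq_comp, show ⟪A (A x), x⟫_ℂ = ⟪A x, A x⟫_ℂ from hA (A x) x, inner_self_eq_norm_sq_to_K]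
  push_cast; rfl

theorem inner_sq_add_sq_apply_self (hA : (A : E →ₗ[ℂ] E).IsSymmetric)
    (hB : (B : E →ₗ[ℂ] E).IsSymmetric) (x : E) :
    ⟪(A ^ 2 + B ^ 2) x, x⟫_ℂ = ((‖A x‖ ^ 2 + ‖B x‖ ^ 2 : ℝ) : ℂ) := by
  rw [add_apply, inner_add_left, hA.inner_sq_apply_self, hB.inner_sq_apply_self]
  push_cast; rfl

theorem norm_inner_sq_add_I_smul_sq_apply_self (hA : (A : E →ₗ[ℂ] E).IsSymmetric)
    (hB : (B : E →ₗ[ℂ] E).IsSymmetric) (x : E) :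
    ‖⟪(A ^ 2 + Complex.I • B ^ 2) x, x⟫_ℂ‖ = √((‖A x‖ ^ 2) ^ 2 + (‖B x‖ ^ 2) ^ 2) := by
  rw [add_apply, smul_apply, inner_add_left, inner_smul_left, hA.inner_sq_apply_self,
    hB.inner_sq_apply_self, Complex.conj_I, neg_mul, mul_comm, ← sub_eq_add_neg,
    ← neg_sq (‖B x‖ ^ 2), ← Complex.norm_add_mul_I]
  push_cast; ring_nf

theorem numRadius_sq_add_sq_le (hA : (A : E →ₗ[ℂ] E).IsSymmetric)
    (hB : (B : E →ₗ[ℂ] E).IsSymmetric) :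
    numRadius (A ^ 2 + B ^ 2) ≤ √2 * numRadius (A ^ 2 + Complex.I • B ^ 2) := by
  refine numRadius_le_mul_numRadius (Real.sqrt_nonneg 2) fun x => ?_
  rw [inner_sq_add_sq_apply_self hA hB, norm_inner_sq_add_I_smul_sq_apply_self hA hB,
    Complex.norm_real, Real.norm_of_nonneg (by positivity), ← Real.sqrt_mul zero_le_two]
  set a := ‖A x‖ ^ 2
  set b := ‖B x‖ ^ 2
  exact Real.le_sqrt_of_sq_le (by nlinarith [sq_nonneg (a - b)])

theorem numRadius_sq_add_I_smul_sq_le (hA : (A : E →ₗ[ℂ] E).IsSymmetric)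
    (hB : (B : E →ₗ[ℂ] E).IsSymmetric) {c : ℝ} (hAc : ‖A‖ ≤ c) (hBc : ‖B‖ ≤ c) :
    numRadius (A ^ 2 + Complex.I • B ^ 2) ≤ √2 * c ^ 2 := by
  have hc : 0 ≤ c := (norm_nonneg A).trans hAc
  refine numRadius_le_of_forall _ (by positivity) fun x hx => ?_
  have hAx : ‖A x‖ ^ 2 ≤ c ^ 2 := by gcongr; simpa [hx] using A.le_of_opNorm_le hAc x
  have hBx : ‖B x‖ ^ 2 ≤ c ^ 2 := by gcongr; simpa [hx] using B.le_of_opNorm_le hBc x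
  rw [norm_inner_sq_add_I_smul_sq_apply_self hA hB, ← Real.sqrt_sq (sq_nonneg c),
    ← Real.sqrt_mul zero_le_two]
  gcongr
  nlinarith [sq_nonneg (‖A x‖), sq_nonneg (‖B x‖)]

end NumericalRadius

section CartesianDecomposition

variable (T : H →L[ℂ] H)

theorem reP_isSelfAdjoint : IsSelfAdjoint (reP T) := by
  rw [IsSelfAdjoint, reP, ← star_eq_adjoint, star_smul, star_add, star_star, add_comm]
  simp

theorem imP_isSelfAdjoint : IsSelfAdjoint (imP T) := by
  rw [IsSelfAdjoint, imP, ← star_eq_adjoint, star_smul, star_sub, star_star, ← neg_sub,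
    smul_neg, ← neg_smul]
  congr 1
  simp

theorem inner_reP_apply_self (x : H) : ⟪reP T x, x⟫_ℂ = ((⟪T x, x⟫_ℂ).re : ℂ) := by
  rw [reP, smul_apply, add_apply, inner_smul_left, inner_add_left, adjoint_inner_left,
    ← inner_conj_symm x, Complex.add_conj, map_inv₀, Complex.conj_ofNat]
  push_cast
  ring

theorem inner_imP_apply_self (x : H) : ⟪imP T x, x⟫_ℂ = -((⟪T x, x⟫_ℂ).im : ℂ) := by
  rw [imP, smul_apply, sub_apply, inner_smul_left, inner_sub_left, adjoint_inner_left,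
    ← inner_conj_symm x, Complex.sub_conj, map_inv₀, map_mul, Complex.conj_ofNat, Complex.conj_I]
  field_simp
  ring_nf
  simp

theorem numRadius_reP_le : numRadius (reP T) ≤ numRadius T := by
  simpa using numRadius_le_mul_numRadius (S := reP T) zero_le_one fun x => by
    simpa [inner_reP_apply_self] using Complex.abs_re_le_norm _

theorem numRadius_imP_le : numRadius (imP T) ≤ numRadius T := by
  simpa using numRadius_le_mul_numRadius (S := imP T) zero_le_one fun x => by
    simpa [inner_imP_apply_self] using Complex.abs_im_le_norm _

theorem adjoint_mul_self_add_mul_adjoint :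
    adjoint T * T + T * adjoint T = (2 : ℂ) • (reP T ^ 2 + imP T ^ 2) := by
  simp only [reP, imP, sq, smul_mul_smul_comm, mul_add, add_mul, mul_sub, sub_mul, smul_add,
    smul_sub, smul_smul]
  have hI : (2 * Complex.I)⁻¹ * (2 * Complex.I)⁻¹ = -(4 : ℂ)⁻¹ := by
    field_simp; rw [Complex.I_sq]; norm_num
  rw [hI]
  module

end CartesianDecomposition

theorem stmt_13 (T : H →L[ℂ] H) :
    (1/4) * ‖adjoint T * T + T * adjoint T‖ ≤
        (Real.sqrt 2 / 2) * numRadius (reP T ^ 2 + Complex.I • imP T ^ 2) ∧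
      (Real.sqrt 2 / 2) * numRadius (reP T ^ 2 + Complex.I • imP T ^ 2) ≤ numRadius T ^ 2 := by
  have hA := (reP_isSelfAdjoint T).isSymmetric
  have hB := (imP_isSelfAdjoint T).isSymmetric
  have hsum : ‖reP T ^ 2 + imP T ^ 2‖ ≤ √2 * numRadius (reP T ^ 2 + Complex.I • imP T ^ 2) :=
    ((((reP_isSelfAdjoint T).pow 2).add ((imP_isSelfAdjoint T).pow 2)).isSymmetric
      |>.norm_le_numRadius).trans (numRadius_sq_add_sq_le hA hB)
  have hS : numRadius (reP T ^ 2 + Complex.I • imP T ^ 2) ≤ √2 * numRadius T ^ 2 :=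
    numRadius_sq_add_I_smul_sq_le hA hB (hA.norm_le_numRadius.trans (numRadius_reP_le T))
      (hB.norm_le_numRadius.trans (numRadius_imP_le T))
  rw [adjoint_mul_self_add_mul_adjoint, norm_smul, Complex.norm_two]
  constructor
  · linarith
  · calc √2 / 2 * numRadius (reP T ^ 2 + Complex.I • imP T ^ 2)
        ≤ √2 / 2 * (√2 * numRadius T ^ 2) := by gcongr
      _ = numRadius T ^ 2 := by
        rw [← mul_assoc, div_mul_eq_mul_div, Real.mul_self_sqrt zero_le_two, div_self two_ne_zero,
          one_mul]
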